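/- For a Gamma distribution Γ(m,1), the map t ↦ t·G'(t) is increasing on (0, ∞), where G is the G-transform of Γ(m,1). -/

import Mathlib

/-!
Substituting `t = m u` gives `G t = √m · g (t / m)`, where `g u = sgn (u - 1) √(2 h u)` is the
G-transform of `Γ(1,1)` and `h u = u - 1 - log u`; hence `t G'(t) = √m · φ (t / m)` with
`φ u = u g'(u)`. Differentiating `g² = 2h` gives `φ u = (u - 1) / g u = √(q u)` for `u ≠ 1`, where
`q u = (u - 1)² / (2 h u)`. The numerator of `q'` is `4 (u - 1) r u` with
`r u = h u - (u - 1)² / (2u)`, which increases (`r' = (u - 1)² / (2u²)`) and vanishes at `1`, so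
`q` increases on `(0, 1)` and on `(1, ∞)`. The same monotonicity of `r` and of `(u - 1)² / 2 - h u`
traps `q u` between `1` and `u`: this glues the two pieces and gives `g'(1) = 1 = φ 1`.
-/

open Set Filter Topology Real

lemma MonotoneOn.Ioi_of_Ioo_of_Ioi {α β : Type*} [LinearOrder α] [Preorder β] {f : α → β}
    {a c : α} (hac : a < c) (hl : MonotoneOn f (Ioo a c)) (hr : MonotoneOn f (Ioi c))
    (hle : ∀ x ∈ Ioo a c, f x ≤ f c) (hge : ∀ x ∈ Ioi c, f c ≤ f x) :
    MonotoneOn f (Ioi a) := by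
  rw [← Ioc_union_Ici_eq_Ioi hac, ← Ioo_insert_right hac, ← Ioi_insert]
  refine MonotoneOn.union_right (c := c) ?_ ?_ ⟨mem_insert c _, fun x hx => ?_⟩
    ⟨mem_insert c _, fun x hx => ?_⟩
  · exact monotoneOn_insert_iff.2
      ⟨fun x hx _ => hle x hx, fun x hx hcx => absurd hx.2 hcx.not_gt, hl⟩
  · exact monotoneOn_insert_iff.2
      ⟨fun x hx hxc => absurd hx hxc.not_gt, fun x hx _ => hge x hx, hr⟩
  · rcases hx with rfl | hx
    exacts [le_rfl, hx.2.le]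
  · rcases hx with rfl | hx
    exacts [le_rfl, le_of_lt hx]

lemma monotoneOn_of_hasDerivAt_nonneg {D : Set ℝ} (hD : Convex ℝ D) (hDo : IsOpen D)
    {f f' : ℝ → ℝ} (hf : ∀ x ∈ D, HasDerivAt f (f' x) x) (hf' : ∀ x ∈ D, 0 ≤ f' x) :
    MonotoneOn f D := by
  refine monotoneOn_of_hasDerivWithinAt_nonneg hD (f' := f')
    (fun x hx => (hf x hx).continuousAt.continuousWithinAt) ?_ ?_ <;> rw [hDo.interior_eq]
  exacts [fun x hx => (hf x hx).hasDerivWithinAt, hf']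

lemma MonotoneOn.sub_mul_nonneg {f : ℝ → ℝ} {s : Set ℝ} {a b : ℝ} (hf : MonotoneOn f s)
    (ha : a ∈ s) (hb : b ∈ s) (hfa : f a = 0) : 0 ≤ (b - a) * f b := by
  rcases le_total a b with hab | hba
  · exact mul_nonneg (sub_nonneg.2 hab) (hfa ▸ hf ha hb hab)
  · exact mul_nonneg_of_nonpos_of_nonpos (sub_nonpos.2 hba) (hfa ▸ hf hb ha hba)

namespace GammaGTransform

noncomputable def rate (u : ℝ) : ℝ := u - 1 - log u

noncomputable def gTransform (u : ℝ) : ℝ :=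
  if u < 1 then -√(2 * rate u) else √(2 * rate u)

noncomputable def sqRatio (u : ℝ) : ℝ := (u - 1) ^ 2 / (2 * rate u)

variable {u : ℝ}

@[simp] lemma rate_one : rate 1 = 0 := by simp [rate]

lemma rate_pos (hu : 0 < u) (h1 : u ≠ 1) : 0 < rate u := by
  have := log_lt_sub_one_of_pos hu h1
  unfold rate; linarith

lemma hasDerivAt_rate (hu : 0 < u) : HasDerivAt rate (1 - u⁻¹) u :=
  ((hasDerivAt_id u).sub_const 1).sub (hasDerivAt_log hu.ne')

lemma monotoneOn_rate_sub : MonotoneOn (fun u => rate u - (u - 1) ^ 2 / (2 * u)) (Ioi 0) := by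
  refine monotoneOn_of_hasDerivAt_nonneg (convex_Ioi 0) isOpen_Ioi
    (f' := fun u => (u - 1) ^ 2 / (2 * u ^ 2)) (fun u (hu : 0 < u) => ?_)
    (fun u _ => by positivity)
  have hsq := (((hasDerivAt_id' u).sub_const 1).fun_pow 2).fun_div
    ((hasDerivAt_id' u).const_mul 2) (by positivity : 2 * u ≠ 0)
  refine ((hasDerivAt_rate hu).fun_sub hsq).congr_deriv ?_
  field_simp
  ring

lemma monotoneOn_sub_rate : MonotoneOn (fun u => (u - 1) ^ 2 / 2 - rate u) (Ioi 0) := by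
  refine monotoneOn_of_hasDerivAt_nonneg (convex_Ioi 0) isOpen_Ioi
    (f' := fun u => (u - 1) ^ 2 / u) (fun u (hu : 0 < u) => ?_)
    (fun u (hu : 0 < u) => by positivity)
  have hsq := (((hasDerivAt_id' u).sub_const 1).fun_pow 2).div_const 2
  refine (hsq.fun_sub (hasDerivAt_rate hu)).congr_deriv ?_
  field_simp
  ring

lemma sub_one_mul_rate_sub_nonneg (hu : 0 < u) :
    0 ≤ (u - 1) * (rate u - (u - 1) ^ 2 / (2 * u)) :=
  monotoneOn_rate_sub.sub_mul_nonneg (mem_Ioi.2 one_pos) hu (by simp)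

lemma sqRatio_mem_uIcc (hu : 0 < u) (h1 : u ≠ 1) : sqRatio u ∈ uIcc 1 u := by
  have hr := rate_pos hu h1
  have hrate_sub := sub_one_mul_rate_sub_nonneg hu
  have hsub_rate := monotoneOn_sub_rate.sub_mul_nonneg (mem_Ioi.2 one_pos) hu (by simp)
  rw [sqRatio, mem_uIcc, le_div_iff₀ (by positivity), div_le_iff₀ (by positivity),
    le_div_iff₀ (by positivity), div_le_iff₀ (by positivity)]
  have hu2 : (u - 1) ^ 2 / (2 * u) * (2 * u) = (u - 1) ^ 2 := by field_simp
  rcases h1.lt_or_gt with h | h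
  · right
    constructor <;> nlinarith
  · left
    constructor <;> nlinarith

lemma hasDerivAt_sqRatio (hu : 0 < u) (h1 : u ≠ 1) :
    HasDerivAt sqRatio (4 * ((u - 1) * (rate u - (u - 1) ^ 2 / (2 * u))) / (2 * rate u) ^ 2) u := by
  have hr := rate_pos hu h1
  refine ((((hasDerivAt_id' u).sub_const 1).fun_pow 2).fun_div
    ((hasDerivAt_rate hu).const_mul 2) (by positivity)).congr_deriv ?_
  field_simp
  ring

lemma monotoneOn_sqRatio {s : Set ℝ} (hs : Convex ℝ s) (hso : IsOpen s) (hs0 : s ⊆ Ioi 0)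
    (hs1 : 1 ∉ s) : MonotoneOn sqRatio s :=
  monotoneOn_of_hasDerivAt_nonneg hs hso
    (fun u hu => hasDerivAt_sqRatio (hs0 hu) (ne_of_mem_of_not_mem hu hs1))
    (fun u hu => by have := sub_one_mul_rate_sub_nonneg (hs0 hu); positivity)

lemma tendsto_sqRatio_one : Tendsto sqRatio (𝓝[≠] 1) (𝓝 1) := by
  have hid : Tendsto (fun u : ℝ => u) (𝓝[≠] 1) (𝓝 1) :=
    tendsto_nhdsWithin_of_tendsto_nhds tendsto_id
  refine tendsto_of_tendsto_of_tendsto_of_le_of_le'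
    (by simpa using (tendsto_const_nhds (x := (1 : ℝ))).min hid)
    (by simpa using (tendsto_const_nhds (x := (1 : ℝ))).max hid) ?_ ?_
  all_goals
    filter_upwards [self_mem_nhdsWithin, nhdsWithin_le_nhds (Ioi_mem_nhds one_pos)]
      with u h1 hu
  exacts [(sqRatio_mem_uIcc hu h1).1, (sqRatio_mem_uIcc hu h1).2]

@[simp] lemma gTransform_one : gTransform 1 = 0 := by simp [gTransform]

lemma hasDerivAt_gTransform (hu : 0 < u) (h1 : u ≠ 1) :
    HasDerivAt gTransform ((1 - u⁻¹) / gTransform u) u := by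
  have hr := rate_pos hu h1
  have hsqrt := ((hasDerivAt_rate hu).const_mul 2).sqrt (by positivity)
  rcases h1.lt_or_gt with h | h
  · have heq : gTransform =ᶠ[𝓝 u] fun v => -√(2 * rate v) := by
      filter_upwards [Iio_mem_nhds h] with v hv
      simp [gTransform, show v < 1 from hv]
    refine (hsqrt.neg.congr_of_eventuallyEq heq).congr_deriv ?_
    rw [gTransform, if_pos h]
    field_simp
  · have heq : gTransform =ᶠ[𝓝 u] fun v => √(2 * rate v) := by
      filter_upwards [Ioi_mem_nhds h] with v hv
      simp [gTransform, not_lt.2 (le_of_lt (show 1 < v from hv))]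
    refine (hsqrt.congr_of_eventuallyEq heq).congr_deriv ?_
    rw [gTransform, if_neg (not_lt.2 h.le)]
    field_simp

lemma sub_one_div_gTransform (u : ℝ) : (u - 1) / gTransform u = √(sqRatio u) := by
  rw [sqRatio, sqrt_div (sq_nonneg _), sqrt_sq_eq_abs, gTransform]
  rcases lt_or_ge u 1 with h | h
  · rw [if_pos h, abs_of_neg (sub_neg.2 h), div_neg, neg_div]
  · rw [if_neg (not_lt.2 h), abs_of_nonneg (sub_nonneg.2 h)]

lemma hasDerivAt_gTransform_one : HasDerivAt gTransform 1 1 := by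
  rw [hasDerivAt_iff_tendsto_slope]
  have hlim : Tendsto (fun u => (√(sqRatio u))⁻¹) (𝓝[≠] 1) (𝓝 1) := by
    simpa using ((continuous_sqrt.tendsto 1).comp tendsto_sqRatio_one).inv₀ (by simp)
  refine hlim.congr' ?_
  filter_upwards [self_mem_nhdsWithin, nhdsWithin_le_nhds (Ioi_mem_nhds one_pos)] with u h1 hu
  rw [slope_def_field, gTransform_one, sub_zero, ← sub_one_div_gTransform, inv_div]

lemma mul_deriv_gTransform (hu : 0 < u) (h1 : u ≠ 1) :
    u * deriv gTransform u = √(sqRatio u) := by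
  rw [(hasDerivAt_gTransform hu h1).deriv, ← sub_one_div_gTransform, mul_div_assoc',
    mul_sub, mul_inv_cancel₀ hu.ne', mul_one]

lemma monotoneOn_mul_deriv_gTransform :
    MonotoneOn (fun u => u * deriv gTransform u) (Ioi 0) := by
  have hone : 1 * deriv gTransform 1 = 1 := by rw [hasDerivAt_gTransform_one.deriv, one_mul]
  have hsqrt : ∀ {s : Set ℝ}, Convex ℝ s → IsOpen s → s ⊆ Ioi 0 → 1 ∉ s →
      MonotoneOn (fun u => u * deriv gTransform u) s := fun hs hso hs0 hs1 =>
    ((Real.sqrt_monotone.comp_monotoneOn (monotoneOn_sqRatio hs hso hs0 hs1)).congr fun u hu =>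
      (mul_deriv_gTransform (hs0 hu) (ne_of_mem_of_not_mem hu hs1)).symm)
  refine MonotoneOn.Ioi_of_Ioo_of_Ioi one_pos
    (hsqrt (convex_Ioo 0 1) isOpen_Ioo Ioo_subset_Ioi_self (by simp))
    (hsqrt (convex_Ioi 1) isOpen_Ioi (Ioi_subset_Ioi zero_le_one) (by simp)) ?_ ?_
  · intro u hu
    rw [mul_deriv_gTransform hu.1 hu.2.ne, hone, sqrt_le_one]
    exact (sqRatio_mem_uIcc hu.1 hu.2.ne).2.trans (max_eq_left hu.2.le).le
  · intro u hu
    rw [mul_deriv_gTransform (zero_lt_one.trans hu) hu.ne', hone, one_le_sqrt]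
    exact (min_eq_left (le_of_lt hu)).ge.trans (sqRatio_mem_uIcc (zero_lt_one.trans hu) hu.ne').1

lemma two_mul_sub_sub_mul_log_div {m : ℝ} (hm : 0 < m) (s : ℝ) :
    2 * (s - m - m * log (s / m)) = m * (2 * rate (m⁻¹ * s)) := by
  rw [rate, div_eq_inv_mul]
  field_simp

end GammaGTransform

open GammaGTransform in
/-- For the Gamma distribution `Γ(m,1)`, the map `t ↦ t·G'(t)` is increasing on `(0, ∞)`,
where `G` is the G-transform of `Γ(m,1)`. -/
theorem t_mul_derivG_monotone (m : ℝ) (hm : 0 < m) (G : ℝ → ℝ)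
    (hG : G = fun s : ℝ =>
      if s < m then -Real.sqrt (2 * (s - m - m * Real.log (s / m)))
      else Real.sqrt (2 * (s - m - m * Real.log (s / m)))) :
    MonotoneOn (fun t : ℝ => t * deriv G t) (Set.Ioi (0 : ℝ)) := by
  have hscale : G = fun s => √m * gTransform (m⁻¹ * s) := by
    subst hG
    funext s
    have hlt : s < m ↔ m⁻¹ * s < 1 := by rw [inv_mul_lt_one₀ hm]
    simp only [gTransform, two_mul_sub_sub_mul_log_div hm, sqrt_mul hm.le, hlt]
    split_ifs <;> ring
  have hderiv (t : ℝ) : t * deriv G t = √m * (m⁻¹ * t * deriv gTransform (m⁻¹ * t)) := by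
    rw [hscale, deriv_const_mul_field, deriv_comp_mul_left, smul_eq_mul]
    field_simp
  intro a (ha : 0 < a) b (hb : 0 < b) hab
  simp only [hderiv]
  exact mul_le_mul_of_nonneg_left (monotoneOn_mul_deriv_gTransform (mem_Ioi.2 (by positivity))
    (mem_Ioi.2 (by positivity)) (by gcongr)) (sqrt_nonneg m)
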